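/- arXiv:1806.11429 — 4 statements merged into one kernel-verified Lean document; each statement's English description precedes it below -/
import Mathlib

section
/- Let Z ∈ ℝ^{N×N} be a feasible point of the SDP {Z ⪰ 0, Z ≥ 0 entrywise, Tr(Z) = k, Zφ = φ}, where φ ∈ ℝ^N has nonzero blocks φ_a ∈ ℝ^{n_a} with strictly positive entries, and suppose Z is block-diagonal with respect to the partition (i.e., Z^{(a,b)} = 0 for a ≠ b). Then Z = X, where X is the block-diagonal matrix with blocks X^{(a,a)} = φ_a φ_aᵀ / ‖φ_a‖². -/
/-!
Extending `φ` by zero outside each block gives pairwise orthogonal vectors `ψ a`, and `Z` fixes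
each of them because it is block-diagonal and fixes `φ`. Hence `Z` fixes the range of the
orthogonal projection `X = ∑ a, ψ a ψ aᵀ / ‖ψ a‖²`, so `Z - X = (1 - X) Z (1 - X)` is positive
semidefinite. Its trace is `k - k = 0`, so it vanishes.
-/

open Matrix Finset

namespace Matrix

section RankOneProj

variable {K n ι : Type*} [Field K] [Fintype n] [Fintype ι]

def sumRankOneProj (v : ι → n → K) : Matrix n n K :=
  ∑ a, (v a ⬝ᵥ v a)⁻¹ • vecMulVec (v a) (v a)

variable {v : ι → n → K}

lemma sumRankOneProj_apply (i j : n) :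
    sumRankOneProj v i j = ∑ a, (v a ⬝ᵥ v a)⁻¹ * (v a i * v a j) := by
  simp [sumRankOneProj, sum_apply, vecMulVec_apply]

lemma mul_sumRankOneProj {Z : Matrix n n K} (h : ∀ a, Z *ᵥ v a = v a) :
    Z * sumRankOneProj v = sumRankOneProj v := by
  simp [sumRankOneProj, Finset.mul_sum, mul_vecMulVec, h]

lemma sumRankOneProj_mulVec (horth : Pairwise fun a b => v a ⬝ᵥ v b = 0)
    (hv : ∀ a, v a ⬝ᵥ v a ≠ 0) (b : ι) : sumRankOneProj v *ᵥ v b = v b := by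
  rw [sumRankOneProj, sum_mulVec, Finset.sum_eq_single b]
  · rw [smul_mulVec, vecMulVec_mulVec, op_smul_eq_smul, smul_smul, inv_mul_cancel₀ (hv b),
      one_smul]
  · intro a _ hab
    rw [smul_mulVec, vecMulVec_mulVec, horth hab, MulOpposite.op_zero, zero_smul, smul_zero]
  · simp

lemma isIdempotentElem_sumRankOneProj (horth : Pairwise fun a b => v a ⬝ᵥ v b = 0)
    (hv : ∀ a, v a ⬝ᵥ v a ≠ 0) : IsIdempotentElem (sumRankOneProj v) :=
  mul_sumRankOneProj (sumRankOneProj_mulVec horth hv)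

lemma trace_sumRankOneProj (hv : ∀ a, v a ⬝ᵥ v a ≠ 0) :
    (sumRankOneProj v).trace = Fintype.card ι := by
  simp [sumRankOneProj, trace_sum, hv]

lemma isHermitian_sumRankOneProj [StarRing K] [TrivialStar K] :
    (sumRankOneProj v).IsHermitian := by
  simp [IsHermitian, sumRankOneProj, transpose_sum, transpose_smul, transpose_vecMulVec]

end RankOneProj

section Indicator

variable {R n : Type*} [CommSemiring R] [Fintype n]

lemma mulVec_indicator_of_mulVec_eq {Z : Matrix n n R} {s : Set n} {φ : n → R}
    (hZs : ∀ i ∈ s, ∀ j ∉ s, Z i j = 0 ∧ Z j i = 0) (hZφ : Z *ᵥ φ = φ) :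
    Z *ᵥ s.indicator φ = s.indicator φ := by
  classical
  ext i
  simp only [mulVec, dotProduct, Set.indicator_apply, mul_ite, mul_zero]
  split_ifs with hi
  · rw [← congr_fun hZφ i]
    exact sum_congr rfl fun j _ => by
      split_ifs with hj
      · rfl
      · simp [(hZs i hi j hj).1]
  · exact sum_eq_zero fun j _ => by
      split_ifs with hj
      · simp [(hZs j hj i hi).2]
      · rfl

lemma indicator_dotProduct_indicator_of_disjoint {s t : Set n} (hst : Disjoint s t)
    (φ ψ : n → R) : s.indicator φ ⬝ᵥ t.indicator ψ = 0 := by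
  refine sum_eq_zero fun i _ => ?_
  by_cases hi : i ∈ s
  · simp [Set.indicator_of_notMem (hst.notMem_of_mem_left hi)]
  · simp [Set.indicator_of_notMem hi]

lemma indicator_dotProduct_indicator_self (s : Finset n) (φ : n → R) :
    (↑s : Set n).indicator φ ⬝ᵥ (↑s : Set n).indicator φ = ∑ l ∈ s, φ l ^ 2 := by
  classical
  simp [dotProduct, Set.indicator_apply, sq]

end Indicator

namespace PosSemidef

open scoped ComplexOrder

variable {𝕜 n : Type*} [RCLike 𝕜] [Fintype n] [DecidableEq n]

lemma eq_of_mul_eq_of_trace_eq {Z P : Matrix n n 𝕜} (hZ : Z.PosSemidef) (hP : P.IsHermitian)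
    (hPP : IsIdempotentElem P) (hZP : Z * P = P) (htr : Z.trace = P.trace) : Z = P := by
  have hPZ : P * Z = P := by
    simpa [conjTranspose_mul, hZ.isHermitian.eq, hP.eq] using congr_arg (·ᴴ) hZP
  have hsub : Z - P = (1 - P)ᴴ * Z * (1 - P) := by
    rw [conjTranspose_sub, hP.eq, conjTranspose_one, Matrix.sub_mul, Matrix.one_mul, hPZ,
      Matrix.mul_sub, Matrix.mul_one, Matrix.sub_mul, hZP, hPP.eq]
    abel
  have hpsd : (Z - P).PosSemidef := hsub ▸ hZ.conjTranspose_mul_mul_same (1 - P)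
  exact sub_eq_zero.mp (hpsd.trace_eq_zero_iff.mp (by rw [trace_sub, htr, sub_self]))

end PosSemidef

end Matrix

theorem stmt_9_general {N k : ℕ}
    (Γ : Fin k → Finset (Fin N))
    (hdisj : ∀ a b, a ≠ b → Disjoint (Γ a) (Γ b))
    (hcover : ∀ i, ∃ a, i ∈ Γ a)
    (hne : ∀ a, (Γ a).Nonempty)
    (φ : Fin N → ℝ) (hφ : ∀ i, 0 < φ i)
    (Z : Matrix (Fin N) (Fin N) ℝ)
    (hZpsd : Z.PosSemidef)
    (hZtr : Z.trace = (k : ℝ)) (hZφ : Z.mulVec φ = φ)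
    (hbd : ∀ (a b : Fin k), a ≠ b → ∀ i ∈ Γ a, ∀ j ∈ Γ b, Z i j = 0) :
    ∀ i j, Z i j = ∑ a, if i ∈ Γ a ∧ j ∈ Γ a then
        φ i * φ j / (∑ l ∈ Γ a, (φ l) ^ 2) else 0 := by
  set ψ : Fin k → Fin N → ℝ := fun a => (↑(Γ a) : Set (Fin N)).indicator φ
  have hψψ (a : Fin k) : ψ a ⬝ᵥ ψ a = ∑ l ∈ Γ a, φ l ^ 2 :=
    indicator_dotProduct_indicator_self (Γ a) φ
  have hψ_ne (a : Fin k) : ψ a ⬝ᵥ ψ a ≠ 0 :=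
    hψψ a ▸ (sum_pos (fun l _ => pow_pos (hφ l) 2) (hne a)).ne'
  have horth : Pairwise fun a b => ψ a ⬝ᵥ ψ b = 0 := fun a b hab =>
    indicator_dotProduct_indicator_of_disjoint (disjoint_coe.mpr (hdisj a b hab)) φ φ
  have hZψ (a : Fin k) : Z *ᵥ ψ a = ψ a := by
    refine mulVec_indicator_of_mulVec_eq (fun i hi j hj => ?_) hZφ
    obtain ⟨b, hb⟩ := hcover j
    have hba : a ≠ b := by rintro rfl; exact hj hb
    exact ⟨hbd a b hba i hi j hb, hbd b a hba.symm j hb i hi⟩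
  have hZX : Z = sumRankOneProj ψ :=
    hZpsd.eq_of_mul_eq_of_trace_eq isHermitian_sumRankOneProj
      (isIdempotentElem_sumRankOneProj horth hψ_ne) (mul_sumRankOneProj hZψ)
      (by rw [hZtr, trace_sumRankOneProj hψ_ne, Fintype.card_fin])
  intro i j
  rw [hZX, sumRankOneProj_apply]
  refine sum_congr rfl fun a _ => ?_
  rw [hψψ]
  by_cases hi : i ∈ Γ a <;> by_cases hj : j ∈ Γ a <;> simp [ψ, hi, hj, div_eq_inv_mul]

theorem stmt_9 {N k : ℕ}
    (Γ : Fin k → Finset (Fin N))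
    (hdisj : ∀ a b, a ≠ b → Disjoint (Γ a) (Γ b))
    (hcover : ∀ i, ∃ a, i ∈ Γ a)
    (hne : ∀ a, (Γ a).Nonempty)
    (φ : Fin N → ℝ) (hφ : ∀ i, 0 < φ i)
    (Z : Matrix (Fin N) (Fin N) ℝ)
    (hZpsd : Z.PosSemidef) (hZnn : ∀ i j, 0 ≤ Z i j)
    (hZtr : Z.trace = (k : ℝ)) (hZφ : Z.mulVec φ = φ)
    (hbd : ∀ (a b : Fin k), a ≠ b → ∀ i ∈ Γ a, ∀ j ∈ Γ b, Z i j = 0) :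
    ∀ i j, Z i j = ∑ a, if i ∈ Γ a ∧ j ∈ Γ a then
        φ i * φ j / (∑ l ∈ Γ a, (φ l) ^ 2) else 0 :=
  stmt_9_general Γ hdisj hcover hne φ hφ Z hZpsd hZtr hZφ hbd
end

section
/- Sufficient dual certificate condition: Let X be a feasible solution of min ⟨A, Z⟩ subject to Z ⪰ 0, Z ≥ 0, Tr(Z) = k, Zφ = φ, where X^{(a,a)} = φ_a φ_aᵀ/‖φ_a‖² and X^{(a,b)} = 0 for a ≠ b with each φ_a entrywise positive. Suppose there exist a symmetric matrix B and a positive semidefinite matrix Q with A + 𝒜*(λ) = Q + B for some dual variable λ (i.e., Q + B − A = (1/2)(αφᵀ + φαᵀ) + zI for some α ∈ ℝ^N, z ∈ ℝ), QX = 0, B^{(a,a)} = 0 for all a, and B^{(a,b)} entrywise strictly positive for all a ≠ b. Then X is the unique global minimizer of the SDP. -/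
/-
The block matrix `X` is the orthogonal projection onto the span of the block vectors `φ_a`.
For every symmetric `W` with `Wφ = φ` and `Tr W = k` the certificate gives
`⟨A, W⟩ = ⟨Q, W⟩ + ⟨B, W⟩ - (α ⬝ φ + z k)`. At `W = X` both pairings vanish (`QX = 0`, and
`B` lives off the diagonal blocks while `X` lives on them), whereas for a feasible `Z` both
are nonnegative (Schur product theorem for `⟨Q, Z⟩`, entrywise signs for `⟨B, Z⟩`). If `Z` is
also optimal then `⟨B, Z⟩ = 0`, so `Z` is block diagonal; then `ZX = X`, hence
`Z - X = (1 - X) Z (1 - X)` is positive semidefinite with trace zero, i.e. `Z = X`.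
-/

open Matrix Finset
open scoped ComplexOrder

section PosSemidef

variable {𝕜 n : Type*} [RCLike 𝕜] [Fintype n]

theorem Matrix.PosSemidef.sum_sum_mul_nonneg {Q Z : Matrix n n 𝕜} (hQ : Q.PosSemidef)
    (hZ : Z.PosSemidef) : 0 ≤ ∑ i, ∑ j, Q i j * Z i j := by
  simpa [dotProduct, mulVec, hadamard] using (hQ.hadamard hZ).dotProduct_mulVec_nonneg 1

theorem Matrix.PosSemidef.eq_of_mul_eq_of_trace_eq_s10 [DecidableEq n] {Z P : Matrix n n 𝕜}
    (hZ : Z.PosSemidef) (hP : P.IsHermitian) (hPP : P * P = P) (hZP : Z * P = P)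
    (htr : Z.trace = P.trace) : Z = P := by
  have hPZ : P * Z = P := by
    simpa [conjTranspose_mul, hZ.isHermitian.eq, hP.eq] using congrArg (·ᴴ) hZP
  have hfactor : Z - P = (1 - P) * Z * (1 - P)ᴴ := by
    simp only [conjTranspose_sub, conjTranspose_one, hP.eq, Matrix.sub_mul, Matrix.mul_sub,
      Matrix.one_mul, Matrix.mul_one, hZP, hPZ, hPP]
    abel
  have hpsd : (Z - P).PosSemidef := hfactor ▸ hZ.mul_mul_conjTranspose_same _
  exact sub_eq_zero.mp (hpsd.trace_eq_zero_iff.mp (by rw [trace_sub, htr, sub_self]))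

end PosSemidef

section Pairing

variable {n : Type*} [Fintype n]

theorem Matrix.sum_sum_mul_eq_zero_of_mul_eq_zero {R : Type*} [CommSemiring R]
    {Q X : Matrix n n R} (hX : X.IsSymm) (hQX : Q * X = 0) : ∑ i, ∑ j, Q i j * X i j = 0 := by
  have : ∑ i, ∑ j, Q i j * X i j = (Q * X).trace := by
    simp only [trace, diag, mul_apply]
    exact Finset.sum_congr rfl fun i _ => Finset.sum_congr rfl fun j _ => by rw [hX.apply i j]
  rw [this, hQX, trace_zero]

theorem entry_eq_zero_of_sum_sum_mul_eq_zero {B Z : Matrix n n ℝ} (hB : ∀ i j, 0 ≤ B i j)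
    (hZ : ∀ i j, 0 ≤ Z i j) (h : ∑ i, ∑ j, B i j * Z i j = 0) {i j : n} (hij : 0 < B i j) :
    Z i j = 0 := by
  have hnn : ∀ i j, 0 ≤ B i j * Z i j := fun i j => mul_nonneg (hB i j) (hZ i j)
  rw [Fintype.sum_eq_zero_iff_of_nonneg fun i => Fintype.sum_nonneg (hnn i)] at h
  have := (Fintype.sum_eq_zero_iff_of_nonneg (hnn i)).mp (congrFun h i)
  exact (mul_eq_zero.mp (congrFun this j)).resolve_left hij.ne'

-- `⟨𝒜*(α, z), W⟩ = ⟨(α, z), 𝒜 W⟩` on the affine slice `Wφ = φ`.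
theorem sum_sum_dual_mul [DecidableEq n] {W : Matrix n n ℝ} (hW : W.IsSymm) {φ : n → ℝ}
    (hWφ : W *ᵥ φ = φ) (α : n → ℝ) (z : ℝ) :
    ∑ i, ∑ j, ((α i * φ j + φ i * α j) / 2 + if i = j then z else 0) * W i j
      = α ⬝ᵥ φ + z * W.trace := by
  have hleft : ∑ i, ∑ j, α i * φ j * W i j = α ⬝ᵥ φ := by
    conv_rhs => rw [← hWφ]
    simp only [dotProduct, mulVec, Finset.mul_sum]
    exact Fintype.sum_congr _ _ fun i => Fintype.sum_congr _ _ fun j => by ring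
  have hright : ∑ i, ∑ j, φ i * α j * W i j = α ⬝ᵥ φ := by
    rw [Finset.sum_comm, ← hleft]
    exact Fintype.sum_congr _ _ fun j => Fintype.sum_congr _ _ fun i => by rw [hW.apply i j]; ring
  have hdiag : ∑ i, ∑ j, (if i = j then z else 0) * W i j = z * W.trace := by
    simp [trace, Finset.mul_sum]
  simp only [add_mul, div_mul_eq_mul_div, Finset.sum_add_distrib, ← Finset.sum_div, hleft, hright,
    hdiag]
  ring

theorem sum_sum_mul_eq_of_dual [DecidableEq n] {A B Q W : Matrix n n ℝ} {α φ : n → ℝ} {z : ℝ}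
    (hdual : ∀ i j, (Q + B - A) i j
        = (α i * φ j + φ i * α j) / 2 + (if i = j then z else 0))
    (hW : W.IsSymm) (hWφ : W *ᵥ φ = φ) :
    ∑ i, ∑ j, A i j * W i j
      = ∑ i, ∑ j, Q i j * W i j + ∑ i, ∑ j, B i j * W i j - (α ⬝ᵥ φ + z * W.trace) := by
  simp only [← sum_sum_dual_mul hW hWφ α z, ← hdual, Matrix.sub_apply, Matrix.add_apply,
    sub_mul, add_mul, Finset.sum_sub_distrib, Finset.sum_add_distrib]
  ring

end Pairing

theorem Finset.exists_eq_fiber_of_disjoint_of_cover {ι κ : Type*} [Fintype ι] [DecidableEq κ]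
    {Γ : κ → Finset ι} (hdisj : ∀ a b, a ≠ b → Disjoint (Γ a) (Γ b))
    (hcover : ∀ i, ∃ a, i ∈ Γ a) :
    ∃ blk : ι → κ, Γ = fun a => ({i | blk i = a} : Finset ι) := by
  choose blk hblk using hcover
  refine ⟨blk, funext fun a => Finset.ext fun i => ?_⟩
  rw [Finset.mem_filter_univ]
  refine ⟨fun hi => ?_, fun hi => hi ▸ hblk i⟩
  by_contra h
  exact Finset.disjoint_left.mp (hdisj _ _ h) (hblk i) hi

section BlockProjection

variable {n κ : Type*} [Fintype n] [DecidableEq κ] (b : n → κ) (φ : n → ℝ)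

/-- The paper's `X`: diagonal blocks `φ_a φ_aᵀ / ‖φ_a‖²`, block `a` being the fiber `b⁻¹ a`. -/
noncomputable def blockProjection : Matrix n n ℝ :=
  of fun i j => if b i = b j then φ i * φ j / ∑ l with b l = b i, φ l ^ 2 else 0

variable {b φ}

theorem blockProjection_apply (i j : n) : blockProjection b φ i j =
    if b i = b j then φ i * φ j / ∑ l with b l = b i, φ l ^ 2 else 0 := rfl

theorem isHermitian_blockProjection : (blockProjection b φ).IsHermitian := by
  ext i j
  simp only [conjTranspose_apply, star_trivial, blockProjection_apply, eq_comm (a := b j)]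
  split_ifs with h
  · rw [h, mul_comm]
  · rfl

theorem mul_blockProjection {W : Matrix n n ℝ} (hW : ∀ i j, b i ≠ b j → W i j = 0)
    (hWφ : W *ᵥ φ = φ) : W * blockProjection b φ = blockProjection b φ := by
  ext i j
  have hrow : ∑ l with b l = b j, W i l * φ l = if b i = b j then φ i else 0 := by
    split_ifs with h
    · rw [← congrFun hWφ i, mulVec, dotProduct, Finset.sum_filter_of_ne]
      intro l _ hl
      by_contra hlj
      exact hl (by rw [hW i l (by rw [h]; exact Ne.symm hlj), zero_mul])
    · exact Finset.sum_eq_zero fun l hl => by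
        rw [hW i l (by rw [(Finset.mem_filter.mp hl).2]; exact h), zero_mul]
  calc (W * blockProjection b φ) i j
      = (∑ l with b l = b j, W i l * φ l) * (φ j / ∑ l with b l = b j, φ l ^ 2) := by
        simp only [mul_apply, blockProjection_apply, Finset.sum_filter, Finset.sum_mul]
        refine Finset.sum_congr rfl fun l _ => ?_
        split_ifs with h
        · rw [h]; ring
        · rw [mul_zero, zero_mul]
    _ = blockProjection b φ i j := by
        rw [hrow, blockProjection_apply]
        split_ifs with h
        · rw [h]; ring
        · rw [zero_mul]

theorem sum_sq_fiber_ne_zero (hφ : ∀ i, φ i ≠ 0) (i : n) :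
    ∑ l with b l = b i, φ l ^ 2 ≠ 0 :=
  (Finset.sum_pos (fun l _ => by have := hφ l; positivity) ⟨i, by simp⟩).ne'

theorem blockProjection_mulVec (hφ : ∀ i, φ i ≠ 0) : blockProjection b φ *ᵥ φ = φ := by
  ext i
  have hS := sum_sq_fiber_ne_zero (b := b) hφ i
  calc (blockProjection b φ *ᵥ φ) i
      = φ i * (∑ l with b i = b l, φ l ^ 2) / ∑ l with b l = b i, φ l ^ 2 := by
        simp only [mulVec, dotProduct, blockProjection_apply, Finset.sum_filter, Finset.mul_sum,
          Finset.sum_div, ite_mul, zero_mul]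
        exact Finset.sum_congr rfl fun l _ => by split_ifs <;> ring
    _ = φ i := by simp_rw [eq_comm (a := b i)]; field_simp

theorem blockProjection_mul_self (hφ : ∀ i, φ i ≠ 0) :
    blockProjection b φ * blockProjection b φ = blockProjection b φ :=
  mul_blockProjection (fun i j h => by rw [blockProjection_apply, if_neg h])
    (blockProjection_mulVec hφ)

theorem trace_blockProjection [Fintype κ] (hφ : ∀ i, φ i ≠ 0) (hb : Function.Surjective b) :
    (blockProjection b φ).trace = Fintype.card κ := by
  have hfiber : ∀ a, ∑ i with b i = a, blockProjection b φ i i = 1 := by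
    intro a
    obtain ⟨i₀, rfl⟩ := hb a
    rw [Finset.sum_congr rfl fun i hi => by
      rw [blockProjection_apply, if_pos rfl, (Finset.mem_filter.mp hi).2, ← sq],
      ← Finset.sum_div]
    exact div_self (sum_sq_fiber_ne_zero hφ i₀)
  rw [trace, ← Finset.sum_fiberwise Finset.univ b]
  simp [Matrix.diag, hfiber]

theorem blockProjection_apply_eq_sum [Fintype κ] (i j : n) : blockProjection b φ i j =
      ∑ a, if b i = a ∧ b j = a then φ i * φ j / ∑ l with b l = a, φ l ^ 2 else 0 := by
  rw [blockProjection_apply]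
  split_ifs with h
  · rw [Finset.sum_eq_single (b i) (fun a _ ha => if_neg fun h' => ha h'.1.symm) (by simp),
      if_pos ⟨rfl, h.symm⟩]
  · exact (Finset.sum_eq_zero fun a _ => if_neg fun h' => h (h'.1.trans h'.2.symm)).symm

theorem sum_sum_mul_blockProjection_eq_zero {B : Matrix n n ℝ}
    (hB : ∀ i j, b i = b j → B i j = 0) : ∑ i, ∑ j, B i j * blockProjection b φ i j = 0 := by
  refine Fintype.sum_eq_zero _ fun i => Fintype.sum_eq_zero _ fun j => ?_
  by_cases h : b i = b j
  · rw [hB i j h, zero_mul]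
  · rw [blockProjection_apply, if_neg h, mul_zero]

end BlockProjection

theorem stmt_10_general {N k : ℕ}
    (Γ : Fin k → Finset (Fin N))
    (hdisj : ∀ a b, a ≠ b → Disjoint (Γ a) (Γ b))
    (hcover : ∀ i, ∃ a, i ∈ Γ a)
    (hne : ∀ a, (Γ a).Nonempty)
    (φ : Fin N → ℝ) (hφ : ∀ i, 0 < φ i)
    (A : Matrix (Fin N) (Fin N) ℝ)
    (X : Matrix (Fin N) (Fin N) ℝ)
    (hX : ∀ i j, X i j = ∑ a, if i ∈ Γ a ∧ j ∈ Γ a then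
        φ i * φ j / (∑ l ∈ Γ a, (φ l) ^ 2) else 0)
    (B Q : Matrix (Fin N) (Fin N) ℝ) (α : Fin N → ℝ) (z : ℝ)
    (hQpsd : Q.PosSemidef)
    (hdual : ∀ i j, (Q + B - A) i j
        = (α i * φ j + φ i * α j) / 2 + (if i = j then z else 0))
    (hQX : Q * X = 0)
    (hBdiag : ∀ a : Fin k, ∀ i ∈ Γ a, ∀ j ∈ Γ a, B i j = 0)
    (hBpos : ∀ a b : Fin k, a ≠ b → ∀ i ∈ Γ a, ∀ j ∈ Γ b, 0 < B i j) :
    ∀ Z : Matrix (Fin N) (Fin N) ℝ,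
      Z.PosSemidef → (∀ i j, 0 ≤ Z i j) → Z.trace = (k : ℝ) → Z.mulVec φ = φ →
        (∑ i, ∑ j, A i j * X i j ≤ ∑ i, ∑ j, A i j * Z i j)
        ∧ (∑ i, ∑ j, A i j * Z i j = ∑ i, ∑ j, A i j * X i j → Z = X) := by
  intro Z hZ hZnn hZtr hZφ
  obtain ⟨blk, rfl⟩ := Finset.exists_eq_fiber_of_disjoint_of_cover hdisj hcover
  have hφ₀ : ∀ i, φ i ≠ 0 := fun i => (hφ i).ne'
  have hblk : Function.Surjective blk := fun a => by
    obtain ⟨i, hi⟩ := hne a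
    exact ⟨i, by simpa using hi⟩
  obtain rfl : X = blockProjection blk φ := by
    ext i j
    simp only [hX, blockProjection_apply_eq_sum, Finset.mem_filter_univ]
  have hXsymm : (blockProjection blk φ).IsSymm :=
    isHermitian_iff_isSymm.mp isHermitian_blockProjection
  have hXtr : (blockProjection blk φ).trace = k := by
    rw [trace_blockProjection hφ₀ hblk, Fintype.card_fin]
  have hBon : ∀ i j, blk i = blk j → B i j = 0 := fun i j h =>
    hBdiag (blk i) i (by simp) j (by simp [h])
  have hBoff : ∀ i j, blk i ≠ blk j → 0 < B i j := fun i j h =>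
    hBpos _ _ h i (by simp) j (by simp)
  have hBnn : ∀ i j, 0 ≤ B i j := fun i j => by
    by_cases h : blk i = blk j
    exacts [(hBon i j h).ge, (hBoff i j h).le]
  have hBZ : 0 ≤ ∑ i, ∑ j, B i j * Z i j :=
    Fintype.sum_nonneg fun i => Fintype.sum_nonneg fun j => mul_nonneg (hBnn i j) (hZnn i j)
  have hQZ : 0 ≤ ∑ i, ∑ j, Q i j * Z i j := hQpsd.sum_sum_mul_nonneg hZ
  rw [sum_sum_mul_eq_of_dual hdual hXsymm (blockProjection_mulVec hφ₀),
    sum_sum_mul_eq_of_dual hdual (isHermitian_iff_isSymm.mp hZ.isHermitian) hZφ,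
    Matrix.sum_sum_mul_eq_zero_of_mul_eq_zero hXsymm hQX,
    sum_sum_mul_blockProjection_eq_zero hBon, hXtr, hZtr]
  refine ⟨by linarith, fun heq => ?_⟩
  have hZblock : ∀ i j, blk i ≠ blk j → Z i j = 0 := fun i j h =>
    entry_eq_zero_of_sum_sum_mul_eq_zero hBnn hZnn (by linarith) (hBoff i j h)
  exact hZ.eq_of_mul_eq_of_trace_eq_s10 isHermitian_blockProjection
    (blockProjection_mul_self hφ₀) (mul_blockProjection hZblock hZφ) (by rw [hZtr, hXtr])

theorem stmt_10 {N k : ℕ}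
    (Γ : Fin k → Finset (Fin N))
    (hdisj : ∀ a b, a ≠ b → Disjoint (Γ a) (Γ b))
    (hcover : ∀ i, ∃ a, i ∈ Γ a)
    (hne : ∀ a, (Γ a).Nonempty)
    (φ : Fin N → ℝ) (hφ : ∀ i, 0 < φ i)
    (A : Matrix (Fin N) (Fin N) ℝ) (hA : A.IsSymm)
    (X : Matrix (Fin N) (Fin N) ℝ)
    (hX : ∀ i j, X i j = ∑ a, if i ∈ Γ a ∧ j ∈ Γ a then
        φ i * φ j / (∑ l ∈ Γ a, (φ l) ^ 2) else 0)
    (B Q : Matrix (Fin N) (Fin N) ℝ) (α : Fin N → ℝ) (z : ℝ)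
    (hBsym : B.IsSymm) (hQpsd : Q.PosSemidef)
    (hdual : ∀ i j, (Q + B - A) i j
        = (α i * φ j + φ i * α j) / 2 + (if i = j then z else 0))
    (hQX : Q * X = 0)
    (hBdiag : ∀ a : Fin k, ∀ i ∈ Γ a, ∀ j ∈ Γ a, B i j = 0)
    (hBpos : ∀ a b : Fin k, a ≠ b → ∀ i ∈ Γ a, ∀ j ∈ Γ b, 0 < B i j) :
    ∀ Z : Matrix (Fin N) (Fin N) ℝ,
      Z.PosSemidef → (∀ i j, 0 ≤ Z i j) → Z.trace = (k : ℝ) → Z.mulVec φ = φ →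
        (∑ i, ∑ j, A i j * X i j ≤ ∑ i, ∑ j, A i j * Z i j)
        ∧ (∑ i, ∑ j, A i j * Z i j = ∑ i, ∑ j, A i j * X i j → Z = X) :=
  stmt_10_general Γ hdisj hcover hne φ hφ A X hX B Q α z hQpsd hdual hQX hBdiag hBpos
end

section
/- k-means fails on two parallel lines: consider 2n points x_{1,i} = (−Δ/2, (i−1)/(n−1)) and x_{2,i} = (Δ/2, (i−1)/(n−1)) for 1 ≤ i ≤ n, with n even. The k-means (k=2) cost of the 'vertical' partition with centers c₁ = (−Δ/2, 1/2), c₂ = (Δ/2, 1/2) equals n(2n−1)/(3(n−1)) − n/2, while the cost of the 'horizontal' partition with centers (0, (n−2)/(4(n−1))) and (0, (3n−2)/(4(n−1))) equals nΔ²/2 + n(n−2)/(6(n−1)) − n(n−2)²/(8(n−1)²). Consequently, the average costs converge to 1/12 and Δ²/4 + 1/48 respectively as n → ∞, so for Δ < 1/2 and n large the horizontal partition has strictly smaller k-means cost than the vertical one. -/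
/-!
Both partitions are unions of runs of equally spaced heights `a, a + h, …, a + (M-1) h`
(`h = 1/(n-1)`), and the cost of such a run about a centre `c` splits as
`M · (mean - c)² + h² M (M² - 1) / 12`.
For the vertical partition this gives `n (n + 1) / (6 (n - 1))`. For the horizontal one both
centres sit at distance `h (n - 2m) / 4` from their cluster means (`m = ⌊n/2⌋`), which gives
`n Δ² / 2 + n (n² - 4 + 6 (n mod 2)²) / (24 (n - 1)²)`. Dividing by `2n`, the averages tend to
`1/12` and `Δ²/4 + 1/48`, and the second limit is smaller exactly when `Δ² < 1/4`.
-/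

open Finset Filter

/-- Squared Euclidean distance in the plane. -/
noncomputable def dist2 (p c : ℝ × ℝ) : ℝ := (p.1 - c.1) ^ 2 + (p.2 - c.2) ^ 2

/-- k-means cost of the "vertical" partition (each line one cluster),
with centers `(-Δ/2, 1/2)` and `(Δ/2, 1/2)`, for the two-lines data set. -/
noncomputable def psiV (Δ : ℝ) (n : ℕ) : ℝ :=
  ∑ i ∈ Finset.range n,
    (dist2 (-Δ / 2, (i : ℝ) / ((n : ℝ) - 1)) (-Δ / 2, 1 / 2)
      + dist2 (Δ / 2, (i : ℝ) / ((n : ℝ) - 1)) (Δ / 2, 1 / 2))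

/-- k-means cost of the "horizontal" partition (lower halves of both lines one
cluster, upper halves the other), with centers `(0, (n-2)/(4(n-1)))` and
`(0, (3n-2)/(4(n-1)))`. -/
noncomputable def psiH (Δ : ℝ) (n : ℕ) : ℝ :=
  ∑ i ∈ Finset.range n,
    (let c : ℝ × ℝ :=
      if i < n / 2 then (0, ((n : ℝ) - 2) / (4 * ((n : ℝ) - 1)))
      else (0, (3 * (n : ℝ) - 2) / (4 * ((n : ℝ) - 1)))
    dist2 (-Δ / 2, (i : ℝ) / ((n : ℝ) - 1)) c
      + dist2 (Δ / 2, (i : ℝ) / ((n : ℝ) - 1)) c)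

open Topology

theorem sum_range_sq_arith_sub (a h c : ℝ) (M : ℕ) :
    ∑ i ∈ range M, (a + i * h - c) ^ 2
      = M * (a + (M - 1) * h / 2 - c) ^ 2 + h ^ 2 * M * (M ^ 2 - 1) / 12 := by
  induction M with
  | zero => simp
  | succ M ih => rw [sum_range_succ, ih]; push_cast; ring

theorem dist2_mk_sub_mk (a b y c : ℝ) : dist2 (a, y) (b, c) = (a - b) ^ 2 + (y - c) ^ 2 := rfl

theorem natCast_sub_one_ne_zero {n : ℕ} (hn : n ≠ 1) : (n : ℝ) - 1 ≠ 0 :=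
  sub_ne_zero.2 (mod_cast hn)

theorem psiV_eq (Δ : ℝ) {n : ℕ} (hn : n ≠ 1) :
    psiV Δ n = n * (n + 1) / (6 * ((n : ℝ) - 1)) := by
  have := natCast_sub_one_ne_zero hn
  have hterm : ∀ i ∈ range n,
      dist2 (-Δ / 2, (i : ℝ) / ((n : ℝ) - 1)) (-Δ / 2, 1 / 2)
        + dist2 (Δ / 2, (i : ℝ) / ((n : ℝ) - 1)) (Δ / 2, 1 / 2)
      = 2 * (0 + i * ((n : ℝ) - 1)⁻¹ - 1 / 2) ^ 2 := by
    intro i _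
    simp only [dist2_mk_sub_mk]
    ring
  rw [psiV, sum_congr rfl hterm, ← mul_sum, sum_range_sq_arith_sub]
  field_simp
  ring

theorem psiH_eq (Δ : ℝ) {n : ℕ} (hn : n ≠ 1) :
    psiH Δ n = n * Δ ^ 2 / 2
      + n * ((n : ℝ) ^ 2 - 4 + 6 * ((n % 2 : ℕ) : ℝ) ^ 2) / (24 * ((n : ℝ) - 1) ^ 2) := by
  have := natCast_sub_one_ne_zero hn
  set m := n / 2
  have hmn : m ≤ n := Nat.div_le_self n 2
  have hpair : ∀ y c : ℝ, dist2 (-Δ / 2, y) (0, c) + dist2 (Δ / 2, y) (0, c)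
      = Δ ^ 2 / 2 + 2 * (y - c) ^ 2 := by
    intro y c
    simp only [dist2_mk_sub_mk]
    ring
  set h : ℝ := ((n : ℝ) - 1)⁻¹ with hh
  calc psiH Δ n
      = ∑ i ∈ range m, (Δ ^ 2 / 2 + 2 * (0 + i * h - (n - 2) / (4 * (n - 1))) ^ 2)
        + ∑ i ∈ range (n - m),
            (Δ ^ 2 / 2 + 2 * (m * h + i * h - (3 * n - 2) / (4 * (n - 1))) ^ 2) := by
        rw [psiH, ← sum_range_add_sum_Ico _ hmn, sum_Ico_eq_sum_range]
        congr 1 <;> refine sum_congr rfl fun i hi => ?_ <;> rw [mem_range] at hi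
        · rw [if_pos hi, hpair]
          ring
        · rw [if_neg (by omega), hpair]
          push_cast
          ring
    _ = _ := by
        simp only [sum_add_distrib, sum_const, card_range, nsmul_eq_mul, ← mul_sum,
          sum_range_sq_arith_sub, hh]
        have hsplit : (n : ℝ) = 2 * m + (n % 2 : ℕ) := mod_cast (Nat.div_add_mod n 2).symm
        rw [Nat.cast_sub hmn]
        field_simp
        rw [hsplit]
        ring

theorem tendsto_of_eventually_eq_comp_inv {f : ℕ → ℝ} {g : ℝ → ℝ} (hg : ContinuousAt g 0)
    (hfg : ∀ᶠ n : ℕ in atTop, f n = g (n : ℝ)⁻¹) : Tendsto f atTop (𝓝 (g 0)) :=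
  (hg.tendsto.comp tendsto_inv_atTop_nhds_zero_nat).congr' (hfg.mono fun _ h => h.symm)

theorem tendsto_sq_add_div_sq_sub_one (c : ℝ) :
    Tendsto (fun n : ℕ => ((n : ℝ) ^ 2 + c) / ((n : ℝ) - 1) ^ 2) atTop (𝓝 1) := by
  have hg : ContinuousAt (fun x : ℝ => (1 + c * x ^ 2) / (1 - x) ^ 2) 0 := by
    fun_prop (disch := norm_num)
  convert tendsto_of_eventually_eq_comp_inv hg ?_ using 2
  · norm_num
  filter_upwards [eventually_ge_atTop 2] with n hn
  have := natCast_sub_one_ne_zero (n := n) (by omega)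
  field_simp

theorem tendsto_psiV_div (Δ : ℝ) :
    Tendsto (fun n : ℕ => psiV Δ n / (2 * n)) atTop (𝓝 (1 / 12)) := by
  have hg : ContinuousAt (fun x : ℝ => (1 + x) / (12 * (1 - x))) 0 := by
    fun_prop (disch := norm_num)
  convert tendsto_of_eventually_eq_comp_inv hg ?_ using 2
  · norm_num
  filter_upwards [eventually_ge_atTop 2] with n hn
  have := natCast_sub_one_ne_zero (n := n) (by omega)
  rw [psiV_eq Δ (by omega)]
  field_simp
  ring

theorem tendsto_psiH_div (Δ : ℝ) :
    Tendsto (fun n : ℕ => psiH Δ n / (2 * n)) atTop (𝓝 (Δ ^ 2 / 4 + 1 / 48)) := by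
  have hlim : ∀ c : ℝ, Tendsto (fun n : ℕ => Δ ^ 2 / 4 + ((n : ℝ) ^ 2 + c) / ((n : ℝ) - 1) ^ 2 / 48)
      atTop (𝓝 (Δ ^ 2 / 4 + 1 / 48)) := fun c =>
    ((tendsto_sq_add_div_sq_sub_one c).div_const 48).const_add _
  have hform : ∀ n : ℕ, 2 ≤ n → psiH Δ n / (2 * n)
      = Δ ^ 2 / 4 + ((n : ℝ) ^ 2 + (6 * ((n % 2 : ℕ) : ℝ) ^ 2 - 4)) / ((n : ℝ) - 1) ^ 2 / 48 := by
    intro n hn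
    have := natCast_sub_one_ne_zero (n := n) (by omega)
    rw [psiH_eq Δ (by omega)]
    field_simp
    ring
  have hparity : ∀ n : ℕ, ((n % 2 : ℕ) : ℝ) ^ 2 ≤ 1 := fun n =>
    pow_le_one₀ (Nat.cast_nonneg _) (mod_cast Nat.lt_succ_iff.1 (Nat.mod_lt n two_pos))
  refine tendsto_of_tendsto_of_tendsto_of_le_of_le' (hlim (-4)) (hlim 2) ?_ ?_ <;>
    filter_upwards [eventually_ge_atTop 2] with n hn <;> rw [hform n hn]
  · gcongr
    linarith [sq_nonneg ((n % 2 : ℕ) : ℝ)]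
  · gcongr
    linarith [hparity n]

theorem stmt_17 (Δ : ℝ) (hΔ : 0 ≤ Δ) :
    (∀ n : ℕ, 2 ≤ n → Even n →
      psiV Δ n = (n : ℝ) * (2 * n - 1) / (3 * ((n : ℝ) - 1)) - n / 2
      ∧ psiH Δ n = (n : ℝ) * Δ ^ 2 / 2 + (n : ℝ) * ((n : ℝ) - 2) / (6 * ((n : ℝ) - 1))
          - (n : ℝ) * ((n : ℝ) - 2) ^ 2 / (8 * ((n : ℝ) - 1) ^ 2))
    ∧ Tendsto (fun n : ℕ => psiV Δ n / (2 * n)) atTop (nhds (1 / 12))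
    ∧ Tendsto (fun n : ℕ => psiH Δ n / (2 * n)) atTop (nhds (Δ ^ 2 / 4 + 1 / 48))
    ∧ (Δ < 1 / 2 → ∀ᶠ n : ℕ in atTop, psiH Δ n < psiV Δ n) := by
  refine ⟨fun n hn hev => ⟨?_, ?_⟩, tendsto_psiV_div Δ, tendsto_psiH_div Δ, fun hΔ2 => ?_⟩
  · have := natCast_sub_one_ne_zero (n := n) (by omega)
    rw [psiV_eq Δ (by omega)]
    field_simp
    ring
  · have := natCast_sub_one_ne_zero (n := n) (by omega)
    rw [psiH_eq Δ (by omega), Nat.even_iff.1 hev]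
    field_simp
    ring
  · have hlt : Δ ^ 2 / 4 + 1 / 48 < 1 / 12 := by nlinarith
    filter_upwards [(tendsto_psiH_div Δ).eventually_lt (tendsto_psiV_div Δ) hlt,
      eventually_gt_atTop 0] with n hdiv hn
    exact (div_lt_div_iff_of_pos_right (by positivity)).1 hdiv
end

section
/- Goemans–Williamson certificate implied by the spectral proximity condition: in the two-cluster setting (clusters of size n, N = 2n), if min_{a=1,2} λ₂(L_iso^{(a,a)}) > 2‖D_δ‖ and ‖L_iso‖ ≤ n, then λ₂(D_iso − D_δ − W + (1/2) 1_N 1_Nᵀ) > 0. The proof uses that with g = (1_n, −1_n), diag(g)(L_iso − D_δ − W_δ + (1/2) 1_N 1_Nᵀ) diag(g) = L_iso − D_δ + W_δ + (1/2) g gᵀ, that λ₂(L_iso + (1/2)ggᵀ) = λ₃(L_iso) = min_a λ₂(L_iso^{(a,a)}), and Weyl's inequality together with ‖D_δ − W_δ‖ ≤ 2‖D_δ‖. -/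
/-!
Write `g = (1_n, -1_n)` and `μ = min_a λ₂(L_iso^{(a,a)})`. Conjugating by `diag g` turns `M` into
`L_iso - L_δ + ½ g gᵀ`, where `L_δ = D_δ - W_δ` is the Laplacian of the inter-cluster weights, and
turns the hyperplane `gᵀv = 0` into `1ᵀw = 0`. For such `w`, let `t` be the sum of `w` over the
first cluster (so `-t` over the second). Removing the mean of each block, the spectral gaps of the
blocks give `wᵀ L_iso w ≥ μ (|w|² - 2t²/n)`, while `½ (gᵀw)² = 2t² ≥ 2μt²/n` because
`μ ≤ ‖L_iso‖ ≤ n`. Hence `wᵀ (L_iso + ½ g gᵀ) w ≥ μ |w|² > 2‖D_δ‖ |w|² ≥ wᵀ L_δ w`. So the quadratic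
form of `M` is positive on the hyperplane `g^⊥`, and `M` has at most one eigenvalue `≤ 0`.
-/

open Matrix Finset

/-- The `j`-th smallest eigenvalue (0-indexed) of a Hermitian real matrix,
obtained by sorting the list of its eigenvalues (with multiplicity). -/
noncomputable def kthEig {m : Type*} [Fintype m] [DecidableEq m]
    (A : Matrix m m ℝ) (hA : A.IsHermitian) (j : ℕ) : ℝ :=
  (List.insertionSort (· ≤ ·) (Finset.univ.val.map hA.eigenvalues).toList).getD j 0

namespace Matrix.IsHermitian

variable {m : Type*} [Fintype m] {A : Matrix m m ℝ}

lemma mulVec_dotProduct (hA : A.IsHermitian) (x y : m → ℝ) : A *ᵥ x ⬝ᵥ y = x ⬝ᵥ A *ᵥ y := by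
  rw [dotProduct_mulVec, ← mulVec_transpose, ← conjTranspose_eq_transpose_of_trivial, hA.eq]

variable [DecidableEq m] (hA : A.IsHermitian)

lemma dotProduct_eq_sum_eigenvectorBasis (x y : m → ℝ) :
    x ⬝ᵥ y = ∑ i, (⇑(hA.eigenvectorBasis i) ⬝ᵥ x) * (⇑(hA.eigenvectorBasis i) ⬝ᵥ y) := by
  have := hA.eigenvectorBasis.sum_inner_mul_inner (WithLp.toLp 2 x) (WithLp.toLp 2 y)
  simp only [EuclideanSpace.inner_eq_star_dotProduct, star_trivial] at this
  rw [dotProduct_comm, ← this]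
  exact Finset.sum_congr rfl fun i _ => by rw [dotProduct_comm y]

lemma eigenvectorBasis_dotProduct (i j : m) :
    ⇑(hA.eigenvectorBasis i) ⬝ᵥ ⇑(hA.eigenvectorBasis j) = if i = j then 1 else 0 := by
  rw [← orthonormal_iff_ite.mp hA.eigenvectorBasis.orthonormal i j,
    EuclideanSpace.inner_eq_star_dotProduct, star_trivial, dotProduct_comm]

lemma eigenvectorBasis_dotProduct_mulVec (i : m) (x : m → ℝ) :
    ⇑(hA.eigenvectorBasis i) ⬝ᵥ A *ᵥ x = hA.eigenvalues i * (⇑(hA.eigenvectorBasis i) ⬝ᵥ x) := by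
  rw [← hA.mulVec_dotProduct, hA.mulVec_eigenvectorBasis, smul_dotProduct, smul_eq_mul]

lemma dotProduct_mulVec_eq_sum_eigenvalues (x : m → ℝ) :
    x ⬝ᵥ A *ᵥ x = ∑ i, hA.eigenvalues i * (⇑(hA.eigenvectorBasis i) ⬝ᵥ x) ^ 2 := by
  rw [hA.dotProduct_eq_sum_eigenvectorBasis]
  exact Finset.sum_congr rfl fun i _ => by rw [hA.eigenvectorBasis_dotProduct_mulVec]; ring

lemma dotProduct_self_smul_add_smul_eigenvectorBasis {i j : m} (hij : i ≠ j) (a b : ℝ) :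
    (a • ⇑(hA.eigenvectorBasis i) + b • ⇑(hA.eigenvectorBasis j)) ⬝ᵥ
      (a • ⇑(hA.eigenvectorBasis i) + b • ⇑(hA.eigenvectorBasis j)) = a ^ 2 + b ^ 2 := by
  simp only [add_dotProduct, dotProduct_add, smul_dotProduct, dotProduct_smul, smul_eq_mul,
    hA.eigenvectorBasis_dotProduct, if_neg hij, if_neg hij.symm, if_pos]
  ring

lemma dotProduct_mulVec_smul_add_smul_eigenvectorBasis {i j : m} (hij : i ≠ j) (a b : ℝ) :
    (a • ⇑(hA.eigenvectorBasis i) + b • ⇑(hA.eigenvectorBasis j)) ⬝ᵥ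
      A *ᵥ (a • ⇑(hA.eigenvectorBasis i) + b • ⇑(hA.eigenvectorBasis j))
      = a ^ 2 * hA.eigenvalues i + b ^ 2 * hA.eigenvalues j := by
  simp only [mulVec_add, mulVec_smul, hA.mulVec_eigenvectorBasis, add_dotProduct, dotProduct_add,
    smul_dotProduct, dotProduct_smul, smul_eq_mul, hA.eigenvectorBasis_dotProduct, if_neg hij,
    if_neg hij.symm, if_pos]
  ring

end Matrix.IsHermitian

lemma exists_smul_add_smul_dotProduct_eq_zero {m : Type*} [Fintype m] (g x y : m → ℝ) :
    ∃ a b : ℝ, (a ≠ 0 ∨ b ≠ 0) ∧ g ⬝ᵥ (a • x + b • y) = 0 := by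
  by_cases hx : g ⬝ᵥ x = 0
  · exact ⟨1, 0, Or.inl one_ne_zero, by simp [hx]⟩
  · refine ⟨g ⬝ᵥ y, -(g ⬝ᵥ x), Or.inr (neg_ne_zero.mpr hx), ?_⟩
    simp only [dotProduct_add, dotProduct_smul, smul_eq_mul]
    ring

section Blocks

variable {m n : Type*} [Fintype m] [Fintype n] {B₁ : Matrix m m ℝ} {B₂ : Matrix n n ℝ}

lemma mulVec_one_eq_zero_of_fromBlocks (h : fromBlocks B₁ 0 0 B₂ *ᵥ 1 = 0) :
    B₁ *ᵥ 1 = 0 ∧ B₂ *ᵥ 1 = 0 := by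
  rw [fromBlocks_mulVec] at h
  exact ⟨funext fun a => by simpa using congrFun h (Sum.inl a),
    funext fun a => by simpa using congrFun h (Sum.inr a)⟩

lemma dotProduct_mulVec_le_of_fromBlocks {r : ℝ}
    (h : ∀ v, v ⬝ᵥ fromBlocks B₁ 0 0 B₂ *ᵥ v ≤ r * (v ⬝ᵥ v)) (x : m → ℝ) :
    x ⬝ᵥ B₁ *ᵥ x ≤ r * (x ⬝ᵥ x) := by
  simpa [fromBlocks_mulVec] using h (Sum.elim x 0)

end Blocks

lemma forall_dotProduct_mulVec_pos_of_diagonal_mul_mul_diagonal {m : Type*} [Fintype m]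
    [DecidableEq m] {M : Matrix m m ℝ} {s : m → ℝ} (hs : ∀ i, s i * s i = 1)
    (h : ∀ w, w ≠ 0 → ∑ i, w i = 0 → 0 < w ⬝ᵥ (diagonal s * M * diagonal s) *ᵥ w)
    (v : m → ℝ) (hv : v ≠ 0) (hsv : s ⬝ᵥ v = 0) : 0 < v ⬝ᵥ M *ᵥ v := by
  set w := diagonal s *ᵥ v
  have hvw : v = diagonal s *ᵥ w := by
    rw [mulVec_mulVec, diagonal_mul_diagonal, funext hs, diagonal_one, one_mulVec]
  rw [hvw, (isHermitian_diagonal s).mulVec_dotProduct, mulVec_mulVec, mulVec_mulVec]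
  refine h w (fun hw => hv (by rw [hvw, hw, mulVec_zero])) ?_
  simpa [w, dotProduct, mulVec_diagonal] using hsv

lemma dotProduct_vecMulVec_self_mulVec {m : Type*} [Fintype m] (u w : m → ℝ) :
    w ⬝ᵥ vecMulVec u u *ᵥ w = (u ⬝ᵥ w) ^ 2 := by
  rw [vecMulVec_mulVec, op_smul_eq_smul, dotProduct_smul, smul_eq_mul, dotProduct_comm, sq]

section kthEig

variable {m : Type*} [Fintype m] [DecidableEq m] {A : Matrix m m ℝ} (hA : A.IsHermitian)

lemma insertionSort_eigenvalues_eq_reverse_ofFn :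
    List.insertionSort (· ≤ ·) (Finset.univ.val.map hA.eigenvalues).toList
      = (List.ofFn hA.eigenvalues₀).reverse := by
  refine List.Perm.eq_reverse_of_sortedLE_of_sortedGE ?_ List.sortedLE_insertionSort
    hA.eigenvalues₀_antitone.sortedGE_ofFn
  refine (List.perm_insertionSort _ _).trans ?_
  rw [← Multiset.coe_eq_coe, Multiset.coe_toList, ← Fin.univ_val_map, show hA.eigenvalues = hA.eigenvalues₀ ∘ (Fintype.equivOfCardEq (Fintype.card_fin _)).symm
    from rfl, ← Multiset.map_map, Multiset.map_univ_val_equiv]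

lemma kthEig_eq_eigenvalues₀ {j : ℕ} (hj : j < Fintype.card m) :
    kthEig A hA j = hA.eigenvalues₀ (Fin.rev ⟨j, hj⟩) := by
  rw [kthEig, insertionSort_eigenvalues_eq_reverse_ofFn,
    List.getD_eq_getElem _ _ (by simpa using hj)]
  simp only [List.getElem_reverse, List.getElem_ofFn, List.length_ofFn]
  congr 1
  ext
  simp only [Fin.val_rev]
  omega

lemma kthEig_of_card_le {j : ℕ} (hj : Fintype.card m ≤ j) : kthEig A hA j = 0 := by
  rw [kthEig, insertionSort_eigenvalues_eq_reverse_ofFn,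
    List.getD_eq_default _ _ (by simpa using hj)]

lemma eigenvalues_equivOfCardEq (k : Fin (Fintype.card m)) :
    hA.eigenvalues (Fintype.equivOfCardEq (Fintype.card_fin _) k) = hA.eigenvalues₀ k := by
  simp [Matrix.IsHermitian.eigenvalues]

lemma exists_eigenvalues_eq_kthEig {j : ℕ} (hj : j < Fintype.card m) :
    ∃ i, hA.eigenvalues i = kthEig A hA j :=
  ⟨_, by rw [eigenvalues_equivOfCardEq hA (Fin.rev ⟨j, hj⟩), kthEig_eq_eigenvalues₀]⟩

lemma exists_ne_eigenvalues_le_kthEig_one (hm : 1 < Fintype.card m) :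
    ∃ i j, i ≠ j ∧ hA.eigenvalues i ≤ kthEig A hA 1 ∧ hA.eigenvalues j ≤ kthEig A hA 1 := by
  refine ⟨_, _, ((Fintype.equivOfCardEq (Fintype.card_fin _)).injective.ne
    (Fin.rev_injective.ne (a₁ := ⟨0, by omega⟩) (a₂ := ⟨1, hm⟩) (by simp))), ?_, ?_⟩
  · rw [eigenvalues_equivOfCardEq, kthEig_eq_eigenvalues₀ hA hm]
    exact hA.eigenvalues₀_antitone (Fin.rev_le_rev.mpr (by simp))
  · rw [eigenvalues_equivOfCardEq, kthEig_eq_eigenvalues₀ hA hm]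

lemma eq_of_eigenvalues_lt_kthEig_one {i j : m} (hi : hA.eigenvalues i < kthEig A hA 1)
    (hj : hA.eigenvalues j < kthEig A hA 1) : i = j := by
  rcases le_or_gt (Fintype.card m) 1 with hm | hm
  · exact Fintype.card_le_one_iff.mp hm i j
  -- only the largest index of the antitone `eigenvalues₀` lies below `eigenvalues₀ (rev 1)`
  have hlast : ∀ k, hA.eigenvalues k < kthEig A hA 1 →
      ((Fintype.equivOfCardEq (Fintype.card_fin _)).symm k : ℕ) = Fintype.card m - 1 := by
    intro k hk
    rw [kthEig_eq_eigenvalues₀ hA hm] at hk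
    have hlt := hA.eigenvalues₀_antitone.reflect_lt hk
    have hbound := ((Fintype.equivOfCardEq (Fintype.card_fin (Fintype.card m))).symm k).isLt
    simp only [Fin.lt_def, Fin.val_rev] at hlt
    omega
  exact (Fintype.equivOfCardEq _).symm.injective (Fin.ext ((hlast i hi).trans (hlast j hj).symm))

end kthEig

section Rayleigh

variable {m : Type*} [Fintype m] [DecidableEq m] {A : Matrix m m ℝ} (hA : A.IsHermitian)

lemma kthEig_le_of_forall_dotProduct_mulVec_le {r : ℝ}
    (hr : ∀ v, v ⬝ᵥ A *ᵥ v ≤ r * (v ⬝ᵥ v)) {j : ℕ} (hj : j < Fintype.card m) :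
    kthEig A hA j ≤ r := by
  obtain ⟨i, hi⟩ := exists_eigenvalues_eq_kthEig hA hj
  have := hr (hA.eigenvectorBasis i)
  rwa [hA.eigenvectorBasis_dotProduct_mulVec, hA.eigenvectorBasis_dotProduct, if_pos rfl,
    mul_one, mul_one, hi] at this

lemma kthEig_one_mul_le_dotProduct_mulVec {g : m → ℝ} (hg : g ≠ 0) {r : ℝ}
    (hAg : A *ᵥ g = r • g) (hr : r < kthEig A hA 1) {x : m → ℝ} (hx : g ⬝ᵥ x = 0) :
    kthEig A hA 1 * (x ⬝ᵥ x) ≤ x ⬝ᵥ A *ᵥ x := by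
  -- `g` is an eigenvector for `r < λ₂`, so it lies along the single basis vector `u i₀` whose
  -- eigenvalue is below `λ₂`; `x ⊥ g` then kills the `i₀`-coordinate of `x`.
  set u := fun i => ⇑(hA.eigenvectorBasis i)
  have hcoord : ∀ i, (hA.eigenvalues i - r) * (u i ⬝ᵥ g) = 0 := fun i => by
    have := hA.eigenvectorBasis_dotProduct_mulVec i g
    rw [hAg, dotProduct_smul, smul_eq_mul] at this
    linarith
  obtain ⟨i₀, hi₀⟩ : ∃ i₀, u i₀ ⬝ᵥ g ≠ 0 := by
    by_contra! h
    exact hg (dotProduct_self_eq_zero.mp (by simp [hA.dotProduct_eq_sum_eigenvectorBasis g, u, h]))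
  have heig₀ : hA.eigenvalues i₀ = r := by
    linarith [(mul_eq_zero.mp (hcoord i₀)).resolve_right hi₀]
  have heig : ∀ i ≠ i₀, kthEig A hA 1 ≤ hA.eigenvalues i := fun i hi => by
    by_contra! h
    exact hi (eq_of_eigenvalues_lt_kthEig_one hA h (heig₀ ▸ hr))
  have hx₀ : u i₀ ⬝ᵥ x = 0 := by
    have hgx := hA.dotProduct_eq_sum_eigenvectorBasis g x
    rw [hx, Finset.sum_eq_single i₀] at hgx
    · exact (mul_eq_zero.mp hgx.symm).resolve_left hi₀
    · intro i _ hi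
      have := (mul_eq_zero.mp (hcoord i)).resolve_left (by linarith [heig i hi])
      simp [u, this]
    · simp
  rw [hA.dotProduct_mulVec_eq_sum_eigenvalues, hA.dotProduct_eq_sum_eigenvectorBasis x x,
    Finset.mul_sum]
  refine Finset.sum_le_sum fun i _ => ?_
  rcases eq_or_ne i i₀ with rfl | hi
  · simp [u, hx₀]
  · rw [← sq]
    exact mul_le_mul_of_nonneg_right (heig i hi) (sq_nonneg _)

lemma kthEig_one_pos_of_forall_dotProduct_mulVec_pos (hm : 1 < Fintype.card m) (g : m → ℝ)
    (hpos : ∀ v, v ≠ 0 → g ⬝ᵥ v = 0 → 0 < v ⬝ᵥ A *ᵥ v) :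
    0 < kthEig A hA 1 := by
  -- otherwise two orthonormal eigenvectors with eigenvalues `≤ 0` span a plane meeting `g^⊥`
  by_contra! hle
  obtain ⟨i, j, hij, hi, hj⟩ := exists_ne_eigenvalues_le_kthEig_one hA hm
  obtain ⟨a, b, hab, hg⟩ :=
    exists_smul_add_smul_dotProduct_eq_zero g (hA.eigenvectorBasis i) (hA.eigenvectorBasis j)
  have hvv := hA.dotProduct_self_smul_add_smul_eigenvectorBasis hij a b
  have hne : a • ⇑(hA.eigenvectorBasis i) + b • ⇑(hA.eigenvectorBasis j) ≠ 0 := fun h => by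
    rw [h, zero_dotProduct] at hvv
    rcases hab with ha | hb
    · exact ha (by nlinarith [sq_nonneg b])
    · exact hb (by nlinarith [sq_nonneg a])
  have := hpos _ hne hg
  rw [hA.dotProduct_mulVec_smul_add_smul_eigenvectorBasis hij] at this
  nlinarith [sq_nonneg a, sq_nonneg b]

lemma kthEig_one_mul_le_dotProduct_mulVec_of_mulVec_one [Nonempty m] (hA1 : A *ᵥ 1 = 0)
    (hpos : 0 < kthEig A hA 1) (x : m → ℝ) :
    kthEig A hA 1 * (x ⬝ᵥ x - (∑ i, x i) ^ 2 / Fintype.card m) ≤ x ⬝ᵥ A *ᵥ x := by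
  have hcard : (Fintype.card m : ℝ) ≠ 0 := Nat.cast_ne_zero.mpr Fintype.card_ne_zero
  set c := (∑ i, x i) / Fintype.card m
  set y := x - c • 1
  have hy : 1 ⬝ᵥ y = 0 := by simp [y, c, dotProduct_sub, one_dotProduct, hcard]
  have hx : x = y + c • 1 := by simp [y]
  have hxx : x ⬝ᵥ x = y ⬝ᵥ y + (∑ i, x i) ^ 2 / Fintype.card m := by
    conv_lhs => rw [hx]
    simp only [add_dotProduct, dotProduct_add, smul_dotProduct, dotProduct_smul, smul_eq_mul,
      dotProduct_comm y 1, hy, one_dotProduct_one, c]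
    field_simp
    ring
  have hxAx : x ⬝ᵥ A *ᵥ x = y ⬝ᵥ A *ᵥ y := by
    rw [hx, mulVec_add, mulVec_smul, hA1, smul_zero, add_zero, add_dotProduct, smul_dotProduct,
      ← hA.mulVec_dotProduct 1, hA1, zero_dotProduct, smul_zero, add_zero]
  rw [hxx, hxAx, add_sub_cancel_right]
  exact kthEig_one_mul_le_dotProduct_mulVec hA one_ne_zero (by rw [hA1, zero_smul]) hpos hy

end Rayleigh

section Laplacian

variable {m : Type*} [Fintype m] [DecidableEq m]

def laplacian {R : Type*} [Ring R] (A : Matrix m m R) : Matrix m m R :=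
  diagonal (fun i => ∑ j, A i j) - A

lemma laplacian_mulVec_one {R : Type*} [Ring R] (A : Matrix m m R) : laplacian A *ᵥ 1 = 0 := by
  ext i
  rw [laplacian, sub_mulVec, Pi.sub_apply, mulVec_diagonal]
  simp [mulVec, dotProduct_one]

lemma dotProduct_laplacian_mulVec {R : Type*} [CommRing R] (A : Matrix m m R) (x : m → R) :
    x ⬝ᵥ laplacian A *ᵥ x = ∑ i, ∑ j, A i j * (x i * (x i - x j)) := by
  rw [laplacian, sub_mulVec, dotProduct_sub]
  simp only [dotProduct, mulVec_diagonal]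
  simp only [mulVec, dotProduct, Finset.sum_mul, Finset.mul_sum, ← Finset.sum_sub_distrib]
  exact Finset.sum_congr rfl fun i _ => Finset.sum_congr rfl fun j _ => by ring

lemma dotProduct_laplacian_mulVec_le {A : Matrix m m ℝ} (hA : A.IsSymm) (hnn : ∀ i j, 0 ≤ A i j)
    {r : ℝ} (hr : ∀ i, ∑ j, A i j ≤ r) (x : m → ℝ) :
    x ⬝ᵥ laplacian A *ᵥ x ≤ 2 * r * (x ⬝ᵥ x) := by
  have hsymm : ∑ i, ∑ j, A i j * x j ^ 2 = ∑ i, (∑ j, A i j) * x i ^ 2 := by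
    rw [Finset.sum_comm]
    exact Finset.sum_congr rfl fun i _ => by rw [Finset.sum_mul]; simp [hA.apply]
  calc x ⬝ᵥ laplacian A *ᵥ x = ∑ i, ∑ j, A i j * (x i * (x i - x j)) :=
        dotProduct_laplacian_mulVec A x
    _ ≤ ∑ i, ∑ j, A i j * ((3 * x i ^ 2 + x j ^ 2) / 2) :=
        Finset.sum_le_sum fun i _ => Finset.sum_le_sum fun j _ =>
          mul_le_mul_of_nonneg_left (by nlinarith [sq_nonneg (x i + x j)]) (hnn i j)
    _ = (3 * ∑ i, (∑ j, A i j) * x i ^ 2 + ∑ i, ∑ j, A i j * x j ^ 2) / 2 := by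
        simp only [Finset.mul_sum, Finset.sum_mul, ← Finset.sum_add_distrib, Finset.sum_div]
        exact Finset.sum_congr rfl fun i _ => Finset.sum_congr rfl fun j _ => by ring
    _ = 2 * ∑ i, (∑ j, A i j) * x i ^ 2 := by rw [hsymm]; ring
    _ ≤ 2 * ∑ i, r * x i ^ 2 := by gcongr with i; exact hr i
    _ = 2 * r * (x ⬝ᵥ x) := by simp [dotProduct, Finset.mul_sum, sq, mul_assoc]

end Laplacian

section TwoClusters

variable {m : Type*} {W Wiso : Matrix (m ⊕ m) (m ⊕ m) ℝ}

lemma isSymm_sub_of_isLeft (hWiso : ∀ i j, Wiso i j = if i.isLeft = j.isLeft then W i j else 0)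
    (hsym : W.IsSymm) : (W - Wiso).IsSymm := by
  refine hsym.sub ?_
  ext i j
  simp [hWiso, eq_comm, hsym.apply]

lemma sub_nonneg_of_isLeft (hWiso : ∀ i j, Wiso i j = if i.isLeft = j.isLeft then W i j else 0)
    (hnn : ∀ i j, 0 ≤ W i j) (i j : m ⊕ m) : 0 ≤ (W - Wiso) i j := by
  rw [Matrix.sub_apply, hWiso]
  split_ifs <;> simp [hnn]

variable [Fintype m] [DecidableEq m]

lemma mul_dotProduct_le_dotProduct_fromBlocks_mulVec_add_sq [Nonempty m]
    {B₁ B₂ : Matrix m m ℝ} (h₁ : B₁.IsHermitian) (h₂ : B₂.IsHermitian)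
    (hB₁ : B₁ *ᵥ 1 = 0) (hB₂ : B₂ *ᵥ 1 = 0) {μ : ℝ} (hμ : 0 < μ)
    (hμ₁ : μ ≤ kthEig B₁ h₁ 1) (hμ₂ : μ ≤ kthEig B₂ h₂ 1) (hμm : μ ≤ Fintype.card m)
    (w : m ⊕ m → ℝ) (hw : ∑ i, w i = 0) :
    μ * (w ⬝ᵥ w) ≤ w ⬝ᵥ fromBlocks B₁ 0 0 B₂ *ᵥ w + 1 / 2 * (Sum.elim 1 (-1) ⬝ᵥ w) ^ 2 := by
  obtain ⟨x₁, x₂, rfl⟩ : ∃ x₁ x₂, w = Sum.elim x₁ x₂ := ⟨_, _, (Sum.elim_comp_inl_inr w).symm⟩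
  simp only [Fintype.sum_sum_type, Sum.elim_inl, Sum.elim_inr] at hw
  have hn : (0 : ℝ) < Fintype.card m := Nat.cast_pos.mpr Fintype.card_pos
  have hpoincare : ∀ {B : Matrix m m ℝ} (hB : B.IsHermitian), B *ᵥ 1 = 0 → μ ≤ kthEig B hB 1 →
      ∀ x : m → ℝ, μ * (x ⬝ᵥ x - (∑ i, x i) ^ 2 / Fintype.card m) ≤ x ⬝ᵥ B *ᵥ x := by
    intro B hB hB1 hμB x
    refine le_trans ?_
      (kthEig_one_mul_le_dotProduct_mulVec_of_mulVec_one hB hB1 (hμ.trans_le hμB) x)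
    refine mul_le_mul_of_nonneg_right hμB ?_
    rw [sub_nonneg, div_le_iff₀ hn, mul_comm]
    simpa [dotProduct, sq] using sq_sum_le_card_mul_sum_sq (s := Finset.univ) (f := x)
  have hq₁ := hpoincare h₁ hB₁ hμ₁ x₁
  have hq₂ := hpoincare h₂ hB₂ hμ₂ x₂
  have hcross : μ * ((∑ i, x₁ i) ^ 2 / Fintype.card m) ≤ (∑ i, x₁ i) ^ 2 :=
    calc _ ≤ Fintype.card m * ((∑ i, x₁ i) ^ 2 / Fintype.card m) := by gcongr
      _ = _ := mul_div_cancel₀ _ hn.ne'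
  have hx₂ : ∑ i, x₂ i = -∑ i, x₁ i := by linarith
  simp only [fromBlocks_mulVec, sumElim_dotProduct_sumElim, zero_mulVec, add_zero, zero_add,
    Sum.elim_comp_inl, Sum.elim_comp_inr, one_dotProduct, neg_dotProduct, hx₂, neg_sq,
    neg_neg] at hq₂ ⊢
  nlinarith

lemma laplacian_eq_fromBlocks (hWiso : ∀ i j, Wiso i j = if i.isLeft = j.isLeft then W i j else 0)
    {B₁ B₂ : Matrix m m ℝ} (h₁ : ∀ i j, B₁ i j = laplacian Wiso (Sum.inl i) (Sum.inl j))
    (h₂ : ∀ i j, B₂ i j = laplacian Wiso (Sum.inr i) (Sum.inr j)) :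
    laplacian Wiso = fromBlocks B₁ 0 0 B₂ := by
  ext (a | a) (b | b) <;> simp [h₁, h₂, laplacian, hWiso]

lemma diagonal_sign_mul_mul_diagonal_sign
    (hWiso : ∀ i j, Wiso i j = if i.isLeft = j.isLeft then W i j else 0) :
    diagonal (Sum.elim 1 (-1)) * (diagonal (fun i => ∑ j, Wiso i j)
        - diagonal (fun i => ∑ j, (W - Wiso) i j) - W + (1 / 2 : ℝ) • of (fun _ _ => 1))
      * diagonal (Sum.elim 1 (-1))
      = laplacian Wiso - laplacian (W - Wiso)
        + (1 / 2 : ℝ) • vecMulVec (Sum.elim 1 (-1)) (Sum.elim 1 (-1)) := by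
  ext i j
  rw [mul_diagonal, diagonal_mul]
  rcases i with a | a <;> rcases j with b | b <;>
    simp [laplacian, diagonal_apply, vecMulVec, hWiso] <;> (try split_ifs) <;> ring

end TwoClusters

theorem stmt_19 {n : ℕ} (hn : 0 < n)
    (W : Matrix (Fin n ⊕ Fin n) (Fin n ⊕ Fin n) ℝ)
    (hsym : W.IsSymm) (hnn : ∀ i j, 0 ≤ W i j)
    (Wiso Wδ : Matrix (Fin n ⊕ Fin n) (Fin n ⊕ Fin n) ℝ)
    (hWiso : ∀ i j, Wiso i j = if i.isLeft = j.isLeft then W i j else 0)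
    (hWδ : Wδ = W - Wiso)
    (Liso : Matrix (Fin n ⊕ Fin n) (Fin n ⊕ Fin n) ℝ)
    (hLiso : Liso = Matrix.diagonal (fun i => ∑ j, Wiso i j) - Wiso)
    (B1 B2 : Matrix (Fin n) (Fin n) ℝ)
    (hB1 : ∀ i j, B1 i j = Liso (Sum.inl i) (Sum.inl j))
    (hB2 : ∀ i j, B2 i j = Liso (Sum.inr i) (Sum.inr j))
    (hH1 : B1.IsHermitian) (hH2 : B2.IsHermitian)
    (Dmax : ℝ)
    (hDmax : Dmax = Finset.univ.sup'
        (Finset.univ_nonempty_iff.mpr ⟨Sum.inl ⟨0, hn⟩⟩) (fun i => ∑ j, Wδ i j))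
    -- min_{a=1,2} λ₂(L_iso^{(a,a)}) > 2‖D_δ‖
    (hgap : 2 * Dmax < min (kthEig B1 hH1 1) (kthEig B2 hH2 1))
    -- ‖L_iso‖ ≤ n (as a bound on the quadratic form of the PSD matrix L_iso)
    (hnorm : ∀ v : Fin n ⊕ Fin n → ℝ, v ⬝ᵥ Liso.mulVec v ≤ (n : ℝ) * (v ⬝ᵥ v))
    (M : Matrix (Fin n ⊕ Fin n) (Fin n ⊕ Fin n) ℝ)
    (hM : M = Matrix.diagonal (fun i => ∑ j, Wiso i j)
        - Matrix.diagonal (fun i => ∑ j, Wδ i j) - W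
        + (1 / 2 : ℝ) • Matrix.of (fun _ _ => (1 : ℝ)))
    (hMH : M.IsHermitian) :
    0 < kthEig M hMH 1 := by
  subst hWδ hM
  rw [show diagonal (fun i => ∑ j, Wiso i j) - Wiso = laplacian Wiso from rfl] at hLiso
  subst hLiso
  set μ := min (kthEig B1 hH1 1) (kthEig B2 hH2 1)
  have hWδ_le : ∀ i, ∑ j, (W - Wiso) i j ≤ Dmax := fun i =>
    hDmax ▸ le_sup' (fun i => ∑ j, (W - Wiso) i j) (mem_univ i)
  have hμ : 0 < μ := by
    linarith [(sum_nonneg fun j _ => sub_nonneg_of_isLeft hWiso hnn _ j).trans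
      (hWδ_le (Sum.inl ⟨0, hn⟩))]
  have hblocks := laplacian_eq_fromBlocks hWiso hB1 hB2
  obtain ⟨hB1_one, hB2_one⟩ :=
    mulVec_one_eq_zero_of_fromBlocks (hblocks ▸ laplacian_mulVec_one Wiso)
  have hn2 : 1 < n := by
    by_contra h
    linarith [min_le_left (kthEig B1 hH1 1) (kthEig B2 hH2 1),
      kthEig_of_card_le hH1 (j := 1) (by rw [Fintype.card_fin]; omega)]
  have hμn : μ ≤ n := (min_le_left _ _).trans <| kthEig_le_of_forall_dotProduct_mulVec_le hH1
    (dotProduct_mulVec_le_of_fromBlocks (hblocks ▸ hnorm)) (by simpa using hn2)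
  have : Nonempty (Fin n) := ⟨⟨0, hn⟩⟩
  refine kthEig_one_pos_of_forall_dotProduct_mulVec_pos hMH
    (by rw [Fintype.card_sum, Fintype.card_fin]; omega)
    (Sum.elim 1 (-1))
    (forall_dotProduct_mulVec_pos_of_diagonal_mul_mul_diagonal (by rintro (a | a) <;> simp)
      fun w hw hw_sum => ?_)
  have hiso := mul_dotProduct_le_dotProduct_fromBlocks_mulVec_add_sq hH1 hH2 hB1_one hB2_one hμ
    (min_le_left _ _) (min_le_right _ _) (by simpa using hμn) w hw_sum
  have hδ := dotProduct_laplacian_mulVec_le (isSymm_sub_of_isLeft hWiso hsym)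
    (sub_nonneg_of_isLeft hWiso hnn) hWδ_le w
  have hww : 0 < w ⬝ᵥ w := (sum_nonneg fun i _ => mul_self_nonneg (w i)).lt_of_ne
    (Ne.symm (dotProduct_self_eq_zero.not.mpr hw))
  rw [diagonal_sign_mul_mul_diagonal_sign hWiso, add_mulVec, sub_mulVec, dotProduct_add,
    dotProduct_sub, smul_mulVec, dotProduct_smul, dotProduct_vecMulVec_self_mulVec, smul_eq_mul,
    hblocks]
  nlinarith [mul_pos (sub_pos.mpr hgap) hww]
end
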